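/- The graph G constructed from p blocks of (k−1,τ)-Ramsey graphs (as in the ring-of-blocks construction) has clique number ω(G) ≤ 3τ. -/
import Mathlib


open Finset

variable {V : Type*}

/-- `s` is an independent set of `G`. -/
def IsIndep (G : SimpleGraph V) (s : Finset V) : Prop :=
  ∀ u ∈ s, ∀ w ∈ s, u ≠ w → ¬ G.Adj u w

/-- The independence number `α(G)`. -/
noncomputable def indepNum [Fintype V] (G : SimpleGraph V) : ℕ :=
  sSup {n | ∃ s : Finset V, s.card = n ∧ IsIndep G s}

/-- The clique number `ω(G)`. -/
noncomputable def cliqueNum [Fintype V] (G : SimpleGraph V) : ℕ :=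
  sSup {n | ∃ s : Finset V, s.card = n ∧ G.IsClique ↑s}

/-- A graph is `k`-claw-free if it contains no induced `K_{1,k}`. -/
def IsClawFree (k : ℕ) (G : SimpleGraph V) : Prop :=
  ¬ ∃ (v : V) (s : Finset V), s.card = k ∧ (∀ u ∈ s, G.Adj v u) ∧
      ∀ u ∈ s, ∀ w ∈ s, u ≠ w → ¬ G.Adj u w

/-- Vertices of the auxiliary graph `G'`: block index `i : ZMod p` together with a
vertex of the copy `H¹_i` of `H`, a vertex of the copy `H²_i` of `H`, or a vertex of
the clique `Q_i = K_{τ-1}`. -/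
abbrev RingVert (V : Type*) (p τ : ℕ) := ZMod p × (V ⊕ V ⊕ Fin (τ - 1))

/-- Matching edges of `G'`: in block `i`, either the matching edge joining `v ∈ H¹_i`
to its copy in `H²_i`, or the matching edge joining the `j`-th matched vertex of
`H²_i` to the `j`-th vertex of `Q_i`, or the matching edge joining the `j`-th vertex
of `Q_i` to the `j`-th matched vertex of `H¹_{i+1}`. -/
abbrev RingEdge (V : Type*) (p τ : ℕ) := ZMod p × (V ⊕ Fin (τ - 1) ⊕ Fin (τ - 1))

/-- The non-matching edges of `G'`: edges inside each copy `H¹_i` and `H²_i` of `H`,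
and all edges inside each clique `Q_i`. -/
def ringBase (H : SimpleGraph V) (p τ : ℕ) : SimpleGraph (RingVert V p τ) :=
  SimpleGraph.fromRel (fun x y =>
    x.1 = y.1 ∧
      (match x.2, y.2 with
        | Sum.inl a, Sum.inl b => H.Adj a b
        | Sum.inr (Sum.inl a), Sum.inr (Sum.inl b) => H.Adj a b
        | Sum.inr (Sum.inr _), Sum.inr (Sum.inr _) => True
        | _, _ => False))

/-- The two endpoints in `G'` of a matching edge, where `f i : Fin (τ-1) ↪ V`
selects the `τ-1` vertices of `H²_i` matched to `Q_i`, and `g i : Fin (τ-1) ↪ V`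
selects the `τ-1` vertices of `H¹_i` matched to `Q_{i-1}`. -/
def ringEnds (p τ : ℕ) (f g : ZMod p → Fin (τ - 1) ↪ V) :
    RingEdge V p τ → Set (RingVert V p τ)
  | (i, Sum.inl v) => {(i, Sum.inl v), (i, Sum.inr (Sum.inl v))}
  | (i, Sum.inr (Sum.inl j)) => {(i, Sum.inr (Sum.inl (f i j))), (i, Sum.inr (Sum.inr j))}
  | (i, Sum.inr (Sum.inr j)) => {(i, Sum.inr (Sum.inr j)), (i + 1, Sum.inl (g (i + 1) j))}

/-- The graph `G` of the ring-of-blocks construction: one vertex per matching edge of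
`G'`, two vertices adjacent iff the corresponding matching edges do not form an
induced matching in `G'` (they share an endpoint or some edge of `G'` joins their
endpoint sets). -/
def ringGraph (H : SimpleGraph V) (p τ : ℕ) (f g : ZMod p → Fin (τ - 1) ↪ V) :
    SimpleGraph (RingEdge V p τ) :=
  SimpleGraph.fromRel (fun e e' =>
    ∃ x ∈ ringEnds p τ f g e, ∃ y ∈ ringEnds p τ f g e',
      x = y ∨ (ringBase H p τ).Adj x y)

lemma adjA (H : SimpleGraph V) {p τ : ℕ} (f g : ZMod p → Fin (τ - 1) ↪ V)
    {i i' : ZMod p} {v v' : V}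
    (h : (ringGraph H p τ f g).Adj (i, .inl v) (i', .inl v')) : i = i' ∧ H.Adj v v' := by
  rw [ringGraph, SimpleGraph.fromRel_adj] at h
  obtain ⟨hne, h | h⟩ := h <;>
  · obtain ⟨x, hx, y, hy, hxy⟩ := h
    simp only [ringEnds, Set.mem_insert_iff, Set.mem_singleton_iff] at hx hy
    rcases hx with rfl | rfl <;> rcases hy with rfl | rfl <;>
      simp_all [ringBase, SimpleGraph.fromRel_adj, SimpleGraph.adj_comm, eq_comm]
    all_goals tauto

lemma adjB (H : SimpleGraph V) {p τ : ℕ} (f g : ZMod p → Fin (τ - 1) ↪ V)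
    {i i' : ZMod p} {j j' : Fin (τ - 1)}
    (h : (ringGraph H p τ f g).Adj (i, .inr (.inl j)) (i', .inr (.inl j'))) : i = i' := by
  rw [ringGraph, SimpleGraph.fromRel_adj] at h
  obtain ⟨hne, h | h⟩ := h <;>
  · obtain ⟨x, hx, y, hy, hxy⟩ := h
    simp only [ringEnds, Set.mem_insert_iff, Set.mem_singleton_iff] at hx hy
    rcases hx with rfl | rfl <;> rcases hy with rfl | rfl <;>
      simp_all [ringBase, SimpleGraph.fromRel_adj, SimpleGraph.adj_comm, eq_comm]
    all_goals tauto

lemma adjC (H : SimpleGraph V) {p τ : ℕ} (f g : ZMod p → Fin (τ - 1) ↪ V)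
    {i i' : ZMod p} {j j' : Fin (τ - 1)}
    (h : (ringGraph H p τ f g).Adj (i, .inr (.inr j)) (i', .inr (.inr j'))) : i = i' := by
  rw [ringGraph, SimpleGraph.fromRel_adj] at h
  obtain ⟨hne, h | h⟩ := h <;>
  · obtain ⟨x, hx, y, hy, hxy⟩ := h
    simp only [ringEnds, Set.mem_insert_iff, Set.mem_singleton_iff] at hx hy
    rcases hx with rfl | rfl <;> rcases hy with rfl | rfl <;>
      simp_all [ringBase, SimpleGraph.fromRel_adj, SimpleGraph.adj_comm, eq_comm]
    all_goals tauto

def edgeTag {α β γ : Type*} : α ⊕ (β ⊕ γ) → Fin 3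
  | .inl _ => 0
  | .inr (.inl _) => 1
  | .inr (.inr _) => 2

lemma tag0 {α β γ : Type*} {x : α ⊕ (β ⊕ γ)} (h : edgeTag x = 0) : ∃ a, x = .inl a := by
  rcases x with a | b | c <;> simp_all [edgeTag]

lemma tag1 {α β γ : Type*} {x : α ⊕ (β ⊕ γ)} (h : edgeTag x = 1) : ∃ b, x = .inr (.inl b) := by
  rcases x with a | b | c <;> simp_all [edgeTag]

lemma tag2 {α β γ : Type*} {x : α ⊕ (β ⊕ γ)} (h : edgeTag x = 2) : ∃ c, x = .inr (.inr c) := by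
  rcases x with a | b | c <;> simp_all [edgeTag]

lemma clique_card_le [Fintype V] (H : SimpleGraph V) (t : Finset V) (ht : H.IsClique ↑t) :
    t.card ≤ cliqueNum H := by
  apply le_csSup
  · exact ⟨Fintype.card V, by rintro n ⟨s, rfl, _⟩; simpa using s.card_le_univ⟩
  · exact ⟨t, rfl, ht⟩

theorem ring_cliqueNum' [Fintype V] [DecidableEq V] (H : SimpleGraph V)
    (k p τ : ℕ) [NeZero p] (hk : 4 ≤ k) (hτ : 3 ≤ τ)
    (hω : cliqueNum H ≤ τ - 1)
    (f g : ZMod p → Fin (τ - 1) ↪ V) :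
    cliqueNum (ringGraph H p τ f g) ≤ 3 * τ := by
  classical
  apply csSup_le'
  rintro n ⟨s, rfl, hs⟩
  set G := ringGraph H p τ f g with hG
  set sA := s.filter (fun e => edgeTag e.2 = 0) with hsA
  set sB := s.filter (fun e => edgeTag e.2 = 1) with hsB
  set sC := s.filter (fun e => edgeTag e.2 = 2) with hsC
  have hsub : s ⊆ sA ∪ sB ∪ sC := by
    intro e he
    simp only [hsA, hsB, hsC, Finset.mem_union, Finset.mem_filter]
    have : ∀ x : Fin 3, x = 0 ∨ x = 1 ∨ x = 2 := by decide
    have := this (edgeTag e.2)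
    tauto
  have hcard : s.card ≤ sA.card + sB.card + sC.card := by
    calc s.card ≤ (sA ∪ sB ∪ sC).card := Finset.card_le_card hsub
    _ ≤ (sA ∪ sB).card + sC.card := Finset.card_union_le _ _
    _ ≤ sA.card + sB.card + sC.card := by
        have := Finset.card_union_le sA sB; omega
  have hA : sA.card ≤ τ - 1 := by
    rcases sA.eq_empty_or_nonempty with h | ⟨⟨i₀, x₀⟩, he₀⟩
    · simp [h]
    · obtain ⟨v₀, rfl⟩ := tag0 (Finset.mem_filter.1 he₀).2
      set ψ : RingEdge V p τ → V := fun e => Sum.elim id (fun _ => v₀) e.2 with hψ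
      have hinj : Set.InjOn ψ ↑sA := by
        rintro ⟨i, x⟩ hx' ⟨i', x'⟩ hx'' heq
        obtain ⟨v, rfl⟩ := tag0 (Finset.mem_filter.1 hx').2
        obtain ⟨v', rfl⟩ := tag0 (Finset.mem_filter.1 hx'').2
        simp only [hψ, Sum.elim_inl, id] at heq
        subst heq
        by_contra hne
        have hadj := hs (Finset.mem_coe.2 (Finset.mem_of_mem_filter _ hx'))
          (Finset.mem_coe.2 (Finset.mem_of_mem_filter _ hx'')) hne
        exact H.irrefl (adjA H f g hadj).2
      have hcl : H.IsClique ↑(sA.image ψ) := by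
        rintro v hv v' hv' hvv'
        simp only [Finset.coe_image, Set.mem_image, Finset.mem_coe] at hv hv'
        obtain ⟨⟨i, x⟩, he, rfl⟩ := hv
        obtain ⟨⟨i', x'⟩, he', rfl⟩ := hv'
        obtain ⟨a, rfl⟩ := tag0 (Finset.mem_filter.1 he).2
        obtain ⟨a', rfl⟩ := tag0 (Finset.mem_filter.1 he').2
        simp only [hψ, Sum.elim_inl, id] at hvv' ⊢
        have hne : ((i, Sum.inl a) : RingEdge V p τ) ≠ (i', Sum.inl a') := by
          intro hEq
          exact hvv' (congrArg ψ hEq)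
        have hadj := hs (Finset.mem_coe.2 (Finset.mem_of_mem_filter _ he))
          (Finset.mem_coe.2 (Finset.mem_of_mem_filter _ he')) hne
        exact (adjA H f g hadj).2
      calc sA.card = (sA.image ψ).card := (Finset.card_image_of_injOn hinj).symm
      _ ≤ cliqueNum H := clique_card_le H _ hcl
      _ ≤ τ - 1 := hω
  have hB : sB.card ≤ τ - 1 := by
    rcases sB.eq_empty_or_nonempty with h | ⟨⟨i₀, x₀⟩, he₀⟩
    · simp [h]
    · obtain ⟨j₀, rfl⟩ := tag1 (Finset.mem_filter.1 he₀).2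
      set φ : RingEdge V p τ → Fin (τ - 1) :=
        fun e => Sum.elim (fun _ => j₀) (Sum.elim id (fun _ => j₀)) e.2 with hφ
      have := Finset.card_le_card_of_injOn (s := sB) φ (t := Finset.univ) (fun a _ => Finset.mem_univ _) ?_
      · simpa using this
      · rintro ⟨i, x⟩ hx' ⟨i', x'⟩ hx'' heq
        obtain ⟨j, rfl⟩ := tag1 (Finset.mem_filter.1 hx').2
        obtain ⟨j', rfl⟩ := tag1 (Finset.mem_filter.1 hx'').2
        simp only [hφ, Sum.elim_inr, Sum.elim_inl, id] at heq
        subst heq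
        by_contra hne
        have hadj := hs (Finset.mem_coe.2 (Finset.mem_of_mem_filter _ hx'))
          (Finset.mem_coe.2 (Finset.mem_of_mem_filter _ hx'')) hne
        exact hne (by rw [adjB H f g hadj])
  have hC : sC.card ≤ τ - 1 := by
    rcases sC.eq_empty_or_nonempty with h | ⟨⟨i₀, x₀⟩, he₀⟩
    · simp [h]
    · obtain ⟨j₀, rfl⟩ := tag2 (Finset.mem_filter.1 he₀).2
      set φ : RingEdge V p τ → Fin (τ - 1) :=
        fun e => Sum.elim (fun _ => j₀) (Sum.elim (fun _ => j₀) id) e.2 with hφ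
      have := Finset.card_le_card_of_injOn (s := sC) φ (t := Finset.univ) (fun a _ => Finset.mem_univ _) ?_
      · simpa using this
      · rintro ⟨i, x⟩ hx' ⟨i', x'⟩ hx'' heq
        obtain ⟨j, rfl⟩ := tag2 (Finset.mem_filter.1 hx').2
        obtain ⟨j', rfl⟩ := tag2 (Finset.mem_filter.1 hx'').2
        simp only [hφ, Sum.elim_inr, Sum.elim_inl, id] at heq
        subst heq
        by_contra hne
        have hadj := hs (Finset.mem_coe.2 (Finset.mem_of_mem_filter _ hx'))
          (Finset.mem_coe.2 (Finset.mem_of_mem_filter _ hx'')) hne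
        exact hne (by rw [adjC H f g hadj])
  omega

/-- The ring-of-blocks graph `G` built from `p` blocks of a `(k−1,τ)`-Ramsey graph
`H` (so `α(H) ≤ k−2` and `ω(H) ≤ τ−1`) has clique number `ω(G) ≤ 3τ`. -/
theorem ring_cliqueNum [Fintype V] [DecidableEq V] (H : SimpleGraph V)
    (k p τ : ℕ) [NeZero p] (hk : 4 ≤ k) (hτ : 3 ≤ τ)
    (hα : indepNum H ≤ k - 2) (hω : cliqueNum H ≤ τ - 1)
    (f g : ZMod p → Fin (τ - 1) ↪ V) :
    cliqueNum (ringGraph H p τ f g) ≤ 3 * τ :=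
  ring_cliqueNum' H k p τ hk hτ hω f g
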